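/- Let (V, e) be an order unit space with a central state τ. Then for each v ∈ V, ‖v‖ = ‖v - τ(v)e‖ + |τ(v)|. -/

import Mathlib

/-! The inequality `‖v‖ ≤ ‖v - τ(v) e‖ + |τ(v)|` is the triangle inequality, since `‖e‖ ≤ 1`.
Conversely, let `-r e ≤ v ≤ r e`. Positivity of `τ` gives `|τ(v)| ≤ r`, and when `τ(v) ≥ 0`
centrality applied to `r e - v ≥ 0` gives `r e - v ≤ 2 (r - τ(v)) e`, so that
`v - τ(v) e` lies between `±(r - |τ(v)|) e` (the case `τ(v) < 0` follows by passing to `-v`).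
Hence `‖v - τ(v) e‖ + |τ(v)| ≤ r`, and taking the infimum over `r` gives the reverse inequality. -/

section OrderUnit

variable {V : Type*} [AddCommGroup V] [PartialOrder V] [IsOrderedAddMonoid V] [Module ℝ V]

def IsOrderUnit (e : V) : Prop := ∀ v : V, ∃ r : ℝ, 0 < r ∧ v ≤ r • e

theorem IsOrderUnit.nonneg [PosSMulMono ℝ V] {e : V} (he : IsOrderUnit e) : 0 ≤ e := by
  obtain ⟨r, hr, hle⟩ := he (-e)
  have h : 0 ≤ (r + 1) • e := by
    rw [add_smul, one_smul]
    exact neg_le_iff_add_nonneg.1 hle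
  exact (smul_nonneg_iff_nonneg_of_pos_left (by linarith)).1 h

theorem IsOrderUnit.exists_neg_smul_le_of_le_smul [PosSMulMono ℝ V] {e : V}
    (he : IsOrderUnit e) (v : V) : ∃ r : ℝ, 0 < r ∧ -(r • e) ≤ v ∧ v ≤ r • e := by
  obtain ⟨r₁, hr₁, hv₁⟩ := he v
  obtain ⟨r₂, hr₂, hv₂⟩ := he (-v)
  refine ⟨r₁ + r₂, by linarith, ?_, ?_⟩
  · exact neg_le.1 (hv₂.trans (smul_le_smul_of_nonneg_right (by linarith) he.nonneg))
  · exact hv₁.trans (smul_le_smul_of_nonneg_right (by linarith) he.nonneg)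

theorem abs_apply_le_of_neg_smul_le_of_le_smul {e : V} (τ : V →ₗ[ℝ] ℝ)
    (hτpos : ∀ v : V, 0 ≤ v → 0 ≤ τ v) (hτe : τ e = 1) {v : V} {r : ℝ}
    (hl : -(r • e) ≤ v) (hu : v ≤ r • e) : |τ v| ≤ r := by
  have hle := hτpos _ (sub_nonneg.2 hu)
  have hge := hτpos _ (neg_le_iff_add_nonneg.1 hl)
  simp only [map_sub, map_add, map_smul, hτe, smul_eq_mul, mul_one] at hle hge
  exact abs_le.2 ⟨by linarith, by linarith⟩

theorem neg_smul_le_sub_smul_and_sub_smul_le_of_central {e : V} (τ : V →ₗ[ℝ] ℝ)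
    (hτe : τ e = 1) (hcentral : ∀ v : V, 0 ≤ v → v ≤ (2 * τ v) • e) {v : V} {r : ℝ}
    (hl : -(r • e) ≤ v) (hu : v ≤ r • e) :
    -((r - |τ v|) • e) ≤ v - τ v • e ∧ v - τ v • e ≤ (r - |τ v|) • e := by
  wlog hτv : 0 ≤ τ v generalizing v
  · have hτnv : 0 ≤ τ (-v) := by rw [map_neg, neg_nonneg]; exact (not_le.1 hτv).le
    obtain ⟨hl', hu'⟩ := this (neg_le_neg hu) (neg_le.1 hl) hτnv
    rw [map_neg, abs_neg, neg_smul, sub_neg_eq_add, neg_add_eq_sub, ← neg_sub v] at hl' hu'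
    exact ⟨neg_le.1 hu', neg_le_neg_iff.1 hl'⟩
  rw [abs_of_nonneg hτv, sub_smul]
  refine ⟨?_, sub_le_sub_right hu _⟩
  have hc := hcentral _ (sub_nonneg.2 hu)
  simp only [map_sub, map_smul, hτe, smul_eq_mul, mul_one] at hc
  rw [← sub_nonneg] at hc ⊢
  convert hc using 1
  module

end OrderUnit

section OrderUnitNorm

variable {V : Type*} [NormedAddCommGroup V] [NormedSpace ℝ V] [PartialOrder V]

def IsOrderUnitNorm (e : V) : Prop :=
  ∀ v : V, ‖v‖ = sInf {r : ℝ | 0 < r ∧ -(r • e) ≤ v ∧ v ≤ r • e}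

theorem IsOrderUnitNorm.norm_le {e : V} (hnorm : IsOrderUnitNorm e) {v : V} {s : ℝ} (hs : 0 ≤ s)
    (hl : -(s • e) ≤ v) (hu : v ≤ s • e) : ‖v‖ ≤ s := by
  rcases hs.eq_or_lt with rfl | hs
  · have hv : v = 0 := le_antisymm (by simpa using hu) (by simpa using hl)
    simp [hv]
  · rw [hnorm v]
    exact csInf_le ⟨0, fun r hr => hr.1.le⟩ ⟨hs, hl, hu⟩

theorem IsOrderUnitNorm.le_norm [IsOrderedAddMonoid V] [PosSMulMono ℝ V] {e : V}
    (hnorm : IsOrderUnitNorm e) (he : IsOrderUnit e) {v : V} {a : ℝ}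
    (ha : ∀ r : ℝ, 0 < r → -(r • e) ≤ v → v ≤ r • e → a ≤ r) : a ≤ ‖v‖ := by
  rw [hnorm v]
  obtain ⟨r, hr⟩ := he.exists_neg_smul_le_of_le_smul v
  exact le_csInf ⟨r, hr⟩ fun r hr => ha r hr.1 hr.2.1 hr.2.2

theorem IsOrderUnitNorm.norm_le_one [IsOrderedAddMonoid V] {e : V} (hnorm : IsOrderUnitNorm e)
    (he : 0 ≤ e) : ‖e‖ ≤ 1 :=
  hnorm.norm_le zero_le_one (by simpa using (neg_nonpos.2 he).trans he) (by simp)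

end OrderUnitNorm

theorem stmt17_general {V : Type*} [NormedAddCommGroup V] [NormedSpace ℝ V] [PartialOrder V]
    [CovariantClass V V (· + ·) (· ≤ ·)]
    (e : V)
    (hsmulpos : ∀ (r : ℝ) (v : V), 0 ≤ r → 0 ≤ v → 0 ≤ r • v)
    (hunit : ∀ v : V, ∃ r : ℝ, 0 < r ∧ v ≤ r • e)
    (hnorm : ∀ v : V, ‖v‖ = sInf {r : ℝ | 0 < r ∧ -(r • e) ≤ v ∧ v ≤ r • e})
    (τ : V →ₗ[ℝ] ℝ) (hτpos : ∀ v : V, 0 ≤ v → 0 ≤ τ v) (hτe : τ e = 1)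
    (hcentral : ∀ v : V, 0 ≤ v → v ≤ (2 * τ v) • e) :
    ∀ v : V, ‖v‖ = ‖v - τ v • e‖ + |τ v| := by
  have : IsOrderedAddMonoid V :=
    ⟨fun _ _ h c => add_le_add_left h c, fun _ _ h c => add_le_add_right h c⟩
  have : PosSMulMono ℝ V := .of_smul_nonneg fun r hr v hv => hsmulpos r v hr hv
  have hunit : IsOrderUnit e := hunit
  have hnorm : IsOrderUnitNorm e := hnorm
  intro v
  refine le_antisymm ?_ (hnorm.le_norm hunit fun r _ hl hu => ?_)
  · calc ‖v‖ = ‖(v - τ v • e) + τ v • e‖ := by rw [sub_add_cancel]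
      _ ≤ ‖v - τ v • e‖ + |τ v| * ‖e‖ := by
        rw [← Real.norm_eq_abs, ← norm_smul]
        exact norm_add_le _ _
      _ ≤ ‖v - τ v • e‖ + |τ v| := by
        gcongr
        exact mul_le_of_le_one_right (abs_nonneg _) (hnorm.norm_le_one hunit.nonneg)
  · have hτv := abs_apply_le_of_neg_smul_le_of_le_smul τ hτpos hτe hl hu
    obtain ⟨hl', hu'⟩ := neg_smul_le_sub_smul_and_sub_smul_le_of_central τ hτe hcentral hl hu
    linarith [hnorm.norm_le (sub_nonneg.2 hτv) hl' hu']

/-- In an order unit space `(V, e)` with central state `τ`,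
`‖v‖ = ‖v - τ(v) e‖ + |τ(v)|` for every `v`. -/
theorem stmt17 {V : Type*} [NormedAddCommGroup V] [NormedSpace ℝ V] [PartialOrder V]
    [CovariantClass V V (· + ·) (· ≤ ·)]
    (e : V)
    (hsmulpos : ∀ (r : ℝ) (v : V), 0 ≤ r → 0 ≤ v → 0 ≤ r • v)
    (hArch : ∀ v : V, (∀ r : ℝ, 0 < r → 0 ≤ v + r • e) → 0 ≤ v)
    (hunit : ∀ v : V, ∃ r : ℝ, 0 < r ∧ v ≤ r • e)
    (hnorm : ∀ v : V, ‖v‖ = sInf {r : ℝ | 0 < r ∧ -(r • e) ≤ v ∧ v ≤ r • e})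
    (τ : V →ₗ[ℝ] ℝ) (hτpos : ∀ v : V, 0 ≤ v → 0 ≤ τ v) (hτe : τ e = 1)
    (hcentral : ∀ v : V, 0 ≤ v → v ≤ (2 * τ v) • e) :
    ∀ v : V, ‖v‖ = ‖v - τ v • e‖ + |τ v| :=
  stmt17_general e hsmulpos hunit hnorm τ hτpos hτe hcentral
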